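/- arXiv:2504.00897 — 3 statements merged into one kernel-verified Lean document; each statement's English description precedes it below -/
import Mathlib

section
/- Let Σ be the normal fan of a full-dimensional simple polytope P ⊂ ℝ^d with n facets and ray matrix U ∈ ℝ^{n×d}, and let Δ ⊆ P be a face that is a simplex of dimension d−k > 0 with normal cone σ_Δ. Then the (n−k−2)-dimensional linear subspace of ℙ^{n−1} defined by W_Δ(x) = 0 and x_ρ = 0 for all ρ ∈ σ_Δ(1) is contained both in the universal adjoint hypersurface A_Σ and in the projectivized Zariski closure of the (n−1)-skeleton of the chamber complex Ch(U); in particular, the affine hyperplane {W_Δ(x) = 0} ⊂ ℝ^n equals span_ℝ(e_ρ : ρ ∈ K_Δ) + im(U) with K_Δ = Σ(1)∖(nb(Δ) ∪ σ_Δ(1)), the linear span of an (n−1)-dimensional cone of Ch(U). -/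
open MvPolynomial Finset MeasureTheory
open scoped ENNReal

/-- The polyhedral cone spanned by the ray generators (rows of `U`) indexed by `σ`. -/
def coneOf {ι κ : Type*} [Fintype ι] (U : Matrix ι κ ℝ) (σ : Finset ι) : Set (κ → ℝ) :=
  {y | ∃ c : ι → ℝ, (∀ i, 0 ≤ c i) ∧ (∀ i, i ∉ σ → c i = 0) ∧ y = ∑ i, c i • U i}

/-- A simplicial polyhedral fan with rays indexed by `ι`, living in the space `κ → ℝ`.
Since the fan is simplicial, each cone is recorded by its finite set of rays. -/
structure SimplicialFan (ι κ : Type*) [Fintype ι] [DecidableEq ι] where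
  /-- the ray generator matrix: its rows are the chosen ray generators -/
  U : Matrix ι κ ℝ
  /-- the cones of the fan, each recorded by its set of rays -/
  cones : Finset (Finset ι)
  empty_mem : ∅ ∈ cones
  ray_mem : ∀ i : ι, {i} ∈ cones
  downward : ∀ σ ∈ cones, ∀ τ, τ ⊆ σ → τ ∈ cones
  indep : ∀ σ ∈ cones, LinearIndependent ℝ (fun i : σ => U i.1)
  inter : ∀ σ ∈ cones, ∀ τ ∈ cones, coneOf U σ ∩ coneOf U τ = coneOf U (σ ∩ τ)

/-- `|det|` of the square submatrix of `U` on the rows indexed by `σ`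
(zero if `σ` does not have exactly `card κ` elements). -/
noncomputable def absDetRows {ι κ : Type*} [Fintype κ] [DecidableEq κ]
    (U : Matrix ι κ ℝ) (σ : Finset ι) : ℝ :=
  if h : σ.card = Fintype.card κ then
    |(Matrix.of fun j k : κ =>
        U ((σ.equivFin.symm (Fintype.equivFinOfCardEq h.symm j)) : ι) k).det|
  else 0

/-- The universal adjoint polynomial of the fan data `(U, cones)`:
`Adj = ∑_{σ ∈ Σ(d)} |det U_σ| ∏_{ρ ∉ σ(1)} x_ρ`. -/
noncomputable def Adj {ι κ : Type*} [Fintype ι] [DecidableEq ι] [Fintype κ] [DecidableEq κ]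
    (U : Matrix ι κ ℝ) (cones : Finset (Finset ι)) : MvPolynomial ι ℝ :=
  ∑ σ ∈ cones.filter fun σ => σ.card = Fintype.card κ,
    MvPolynomial.C (absDetRows U σ) * ∏ ρ ∈ σᶜ, MvPolynomial.X ρ

/-- The toric amplitude `Amp = ∑_{σ ∈ Σ(d)} |det U_σ| / ∏_{ρ ∈ σ(1)} x_ρ`
as a real-valued function. -/
noncomputable def Amp {ι κ : Type*} [Fintype ι] [DecidableEq ι] [Fintype κ] [DecidableEq κ]
    (U : Matrix ι κ ℝ) (cones : Finset (Finset ι)) (x : ι → ℝ) : ℝ :=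
  ∑ σ ∈ cones.filter fun σ => σ.card = Fintype.card κ, absDetRows U σ / ∏ ρ ∈ σ, x ρ

/-- The toric amplitude with values in `ℝ≥0∞` (for identities with possibly infinite
dual volumes). -/
noncomputable def AmpE {ι κ : Type*} [Fintype ι] [DecidableEq ι] [Fintype κ] [DecidableEq κ]
    (U : Matrix ι κ ℝ) (cones : Finset (Finset ι)) (x : ι → ℝ) : ℝ≥0∞ :=
  ∑ σ ∈ cones.filter fun σ => σ.card = Fintype.card κ,
    ENNReal.ofReal (absDetRows U σ) / ∏ ρ ∈ σ, ENNReal.ofReal (x ρ)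

/-- The toric amplitude as an element of the field of rational functions. -/
noncomputable def AmpFrac {ι κ : Type*} [Fintype ι] [DecidableEq ι] [Fintype κ] [DecidableEq κ]
    (U : Matrix ι κ ℝ) (cones : Finset (Finset ι)) : FractionRing (MvPolynomial ι ℝ) :=
  ∑ σ ∈ cones.filter fun σ => σ.card = Fintype.card κ,
    algebraMap (MvPolynomial ι ℝ) (FractionRing (MvPolynomial ι ℝ)) (MvPolynomial.C (absDetRows U σ)) /
      algebraMap (MvPolynomial ι ℝ) (FractionRing (MvPolynomial ι ℝ)) (∏ ρ ∈ σ, MvPolynomial.X ρ)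

/-- The toric amplitude of fan data whose rays are indexed by a type `α` mapping to `ι`
via `f`, viewed inside the rational function field on the `ι`-variables. -/
noncomputable def AmpFracVia {α ι κ' : Type*} [Fintype α] [DecidableEq α]
    [Fintype κ'] [DecidableEq κ']
    (U' : Matrix α κ' ℝ) (cones' : Finset (Finset α)) (f : α → ι) :
    FractionRing (MvPolynomial ι ℝ) :=
  ∑ σ ∈ cones'.filter fun σ => σ.card = Fintype.card κ',
    algebraMap (MvPolynomial ι ℝ) (FractionRing (MvPolynomial ι ℝ)) (MvPolynomial.C (absDetRows U' σ)) /
      algebraMap (MvPolynomial ι ℝ) (FractionRing (MvPolynomial ι ℝ)) (∏ ρ ∈ σ, MvPolynomial.X (f ρ))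

/-- The polyhedron `P_z = {y : U y + z ≥ 0}`. -/
def Pz {ι κ : Type*} [Fintype κ] (U : Matrix ι κ ℝ) (z : ι → ℝ) : Set (κ → ℝ) :=
  {y | ∀ i, 0 ≤ (∑ j, U i j * y j) + z i}

/-- The face of `P_z` where the inequalities indexed by `τ` are tight. -/
def faceOf {ι κ : Type*} [Fintype κ] (U : Matrix ι κ ℝ) (z : ι → ℝ) (τ : Finset ι) :
    Set (κ → ℝ) :=
  {y | y ∈ Pz U z ∧ ∀ i ∈ τ, (∑ j, U i j * y j) + z i = 0}

/-- `F` is the normal fan of the polytope `P_z`, which is a full-dimensional simple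
(bounded) polytope whose facets are indexed by the rays of `F`: a set of inequalities
spans a cone of the normal fan iff they are simultaneously tight on a nonempty face. -/
def IsNormalFanOf {ι κ : Type*} [Fintype ι] [DecidableEq ι] [Fintype κ]
    (F : SimplicialFan ι κ) (z : ι → ℝ) : Prop :=
  Bornology.IsBounded (Pz F.U z) ∧ (interior (Pz F.U z)).Nonempty ∧
    ∀ σ : Finset ι, σ ∈ F.cones ↔ (faceOf F.U z σ).Nonempty

/-- The polar dual `{u : u ⬝ y ≥ -1 for all y ∈ P}`. -/
def polarDual {κ : Type*} [Fintype κ] (P : Set (κ → ℝ)) : Set (κ → ℝ) :=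
  {u | ∀ y ∈ P, -1 ≤ ∑ j, u j * y j}

/-- Warren's adjoint polynomial `adj_{P_z}(y) = Adj(U y + z)`. -/
noncomputable def warrenAdj {ι κ : Type*} [Fintype ι] [DecidableEq ι] [Fintype κ] [DecidableEq κ]
    (U : Matrix ι κ ℝ) (cones : Finset (Finset ι)) (z : ι → ℝ) : MvPolynomial κ ℝ :=
  MvPolynomial.aeval (fun i : ι => (∑ j, MvPolynomial.C (U i j) * MvPolynomial.X j) + MvPolynomial.C (z i))
    (Adj U cones)

/-- The neighbours `nb(τ)` of a cone `τ`: rays `ρ ∉ τ` with `τ ∪ {ρ}` a cone. -/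
def nbF {ι : Type*} [Fintype ι] [DecidableEq ι] (cones : Finset (Finset ι)) (τ : Finset ι) :
    Finset ι :=
  Finset.univ.filter fun ρ => ρ ∉ τ ∧ insert ρ τ ∈ cones

/-- The rows of `U * T` indexed by `τ` are the first `k` standard basis vectors. -/
def RowsStd {ι : Type*} {d : ℕ} (U : Matrix ι (Fin d) ℝ) (T : Matrix (Fin d) (Fin d) ℝ)
    (τ : Finset ι) (k : ℕ) : Prop :=
  ∃ g : {ρ : ι // ρ ∈ τ} → Fin d, Function.Injective g ∧ (∀ ρ, (g ρ : ℕ) < k) ∧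
    ∀ ρ : {ρ : ι // ρ ∈ τ}, (U * T) ρ.1 = Pi.single (g ρ) 1

/-- The ray matrix of the star fan `Σ_τ`: the last `d-k` columns of `U * T`, on the
rows indexed by `nb(τ)` (here `N`). -/
def starU {ι : Type*} {d : ℕ} (U : Matrix ι (Fin d) ℝ) (T : Matrix (Fin d) (Fin d) ℝ)
    (N : Finset ι) (k : ℕ) : Matrix {ρ : ι // ρ ∈ N} {j : Fin d // k ≤ (j : ℕ)} ℝ :=
  fun ρ j => (U * T) ρ.1 j.1

/-- The cones of the star fan `Σ_τ`, recorded by their sets of rays (as subsets of `N = nb(τ)`). -/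
def starCones {ι : Type*} [DecidableEq ι] (cones : Finset (Finset ι)) (τ : Finset ι)
    (N : Finset ι) : Finset (Finset {ρ : ι // ρ ∈ N}) :=
  (cones.filter fun σ => τ ⊆ σ).image fun σ => (σ \ τ).subtype fun ρ => ρ ∈ N

/-- Restriction of polynomials to the coordinate subspace `Λ_τ = {x_ρ = 0, ρ ∈ τ}`. -/
noncomputable def restrictTo {ι : Type*} {R : Type*} [CommSemiring R] [DecidableEq ι]
    (τ : Finset ι) : MvPolynomial ι R →ₐ[R] MvPolynomial ι R :=
  MvPolynomial.aeval fun ρ => if ρ ∈ τ then 0 else MvPolynomial.X ρ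

/-- The deformation cone of a (complete simplicial) fan: those `x` for which each
"virtual vertex" of `P_x` determined by a maximal cone satisfies all inequalities. -/
def DefCone {ι κ : Type*} [Fintype ι] [DecidableEq ι] [Fintype κ] (F : SimplicialFan ι κ) :
    Set (ι → ℝ) :=
  {x | ∀ σ ∈ F.cones, σ.card = Fintype.card κ →
    ∃ v : κ → ℝ, (∀ ρ ∈ σ, (∑ j, F.U ρ j * v j) + x ρ = 0) ∧
      ∀ ρ : ι, 0 ≤ (∑ j, F.U ρ j * v j) + x ρ}

/-- The `(d+1) × (d+1)` determinant `W_Δ(x)` of the matrix with rows `(u_ρ, x_ρ)`,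
`ρ ∈ S` (defined up to sign; zero if `S` does not have `d+1` elements). -/
noncomputable def Wdet {ι κ : Type*} [Fintype κ] [DecidableEq κ]
    (U : Matrix ι κ ℝ) (S : Finset ι) (x : ι → ℝ) : ℝ :=
  if h : S.card = Fintype.card (Option κ) then
    (Matrix.of fun a b : Option κ =>
      Option.elim b (x ((S.equivFin.symm (Fintype.equivFinOfCardEq h.symm a)) : ι))
        (fun k => U ((S.equivFin.symm (Fintype.equivFinOfCardEq h.symm a)) : ι) k)).det
  else 0


/-!
Let `S = nb(Δ) ∪ σ_Δ(1)`, a set of `d + 1` facets. A pivot step of the simplex method, starting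
from a vertex of `Δ`, shows that every `S ∖ {ρ}` with `ρ ∈ nb(Δ)` is a vertex cone, and these are
exactly the maximal cones containing `σ_Δ`. Expanding `W_Δ` along its `x`-column gives
`W_Δ(x) = ∑_{ρ ∈ S} C_ρ x_ρ` with `|C_ρ| = |det U_{S ∖ ρ}|` and `∑ C_ρ u_ρ = 0`, so
`∑ C_ρ (⟨u_ρ, v⟩ + z_ρ)` does not depend on `v`; at the vertex `v` of `S ∖ {ρ}` it equals
`C_ρ` times a positive slack, hence all `C_ρ` (`ρ ∈ nb(Δ)`) share one sign. On `{x_ρ = 0, ρ ∈ σ_Δ}`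
only the cones `S ∖ {ρ}` survive in the adjoint, and `Adj(x) = ±W_Δ(x) ∏_{ρ ∉ S} x_ρ`.
Finally `span(e_ρ : ρ ∉ S)` and `im U` meet trivially (a vector of `im U` vanishing on a maximal
cone is zero) and have dimensions `n - d - 1` and `d`, so their sum is the hyperplane `ker W_Δ`.
-/

open Matrix Function

section FinsetIndexing

variable {ι α : Type*}

theorem injective_coe_equiv {S : Finset ι} (e : α ≃ S) : Injective fun a => (e a : ι) :=
  Subtype.val_injective.comp e.injective

theorem range_coe_equiv {S : Finset ι} (e : α ≃ S) : Set.range (fun a => (e a : ι)) = ↑S := by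
  ext i
  simp only [Set.mem_range, Finset.mem_coe]
  exact ⟨by rintro ⟨a, rfl⟩; exact (e a).2, fun hi => ⟨e.symm ⟨i, hi⟩, by simp⟩⟩

variable [Fintype α]

theorem Finset.exists_injective_range_eq (S : Finset ι) (hS : S.card = Fintype.card α) :
    ∃ g : α → ι, Injective g ∧ Set.range g = ↑S :=
  let e := (Fintype.equivFinOfCardEq hS.symm).trans S.equivFin.symm
  ⟨fun a => e a, injective_coe_equiv e, range_coe_equiv e⟩

theorem Finset.card_eq_of_range_eq {S : Finset ι} {g : α → ι} (hg : Injective g)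
    (hr : Set.range g = ↑S) : S.card = Fintype.card α := by
  classical
  have : Finset.univ.image g = S := Finset.coe_injective (by simp [hr])
  rw [← this, Finset.card_image_of_injective _ hg, Finset.card_univ]

end FinsetIndexing

theorem Finset.eq_erase_of_subset_of_notMem {α : Type*} [DecidableEq α] {s t : Finset α} {a : α}
    (hst : s ⊆ t) (hat : a ∈ t) (has : a ∉ s) (hcard : t.card ≤ s.card + 1) : s = t.erase a :=
  Finset.eq_of_subset_of_card_le
    (fun i hi => Finset.mem_erase.2 ⟨ne_of_mem_of_not_mem hi has, hst hi⟩)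
    (by rw [Finset.card_erase_of_mem hat]; omega)

section Determinants

variable {ι m R : Type*} [Fintype m] [DecidableEq m] [CommRing R]

theorem abs_det_submatrix_eq_of_range_eq [LinearOrder R] [IsStrictOrderedRing R]
    (A : Matrix ι m R) {g g' : m → ι} (hg : Injective g) (hg' : Injective g')
    (h : Set.range g = Set.range g') :
    |(A.submatrix g id).det| = |(A.submatrix g' id).det| := by
  let e : m ≃ m := (Equiv.ofInjective g' hg').trans
    ((Equiv.setCongr h.symm).trans (Equiv.ofInjective g hg).symm)
  have : A.submatrix g' id = (A.submatrix g id).submatrix e (Equiv.refl m) := by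
    ext i j
    simp [e, Equiv.apply_ofInjective_symm]
  rw [this, abs_det_submatrix_equiv_equiv]

theorem det_eq_det_submatrix_some (M : Matrix (Option m) (Option m) R)
    (h : ∀ a, M a none = (Pi.single none 1 : Option m → R) a) :
    M.det = (M.submatrix some some).det := by
  let e := (Equiv.optionEquivSumPUnit.{0} m).symm
  rw [← det_submatrix_equiv_self e]
  have : M.submatrix e e =
      fromBlocks (M.submatrix some some) 0 (of fun _ j => M none (some j)) 1 := by
    ext (i | i) (j | j) <;> simp [e, h]
  rw [this, det_fromBlocks_zero₁₂, det_one, mul_one]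

end Determinants

section AugmentedDeterminant

variable {ι κ R : Type*} [Fintype κ] [DecidableEq κ] [CommRing R] (U : Matrix ι κ R)

/-- The matrix with rows `(u_i, x_i)` of which `W_Δ` is a maximal minor; the `x`-column is
indexed by `none`. -/
def augMatrix (x : ι → R) : Matrix ι (Option κ) R :=
  of fun i b => Option.elim b (x i) (fun k => U i k)

noncomputable def augDetLin (g : Option κ → ι) : (ι → R) →ₗ[R] R :=
  LinearMap.proj none ∘ₗ ((augMatrix U 0).submatrix g id).cramer ∘ₗ LinearMap.funLeft R R g

theorem augDetLin_apply (g : Option κ → ι) (x : ι → R) :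
    augDetLin U g x = ((augMatrix U x).submatrix g id).det := by
  simp only [augDetLin, LinearMap.comp_apply, LinearMap.proj_apply, cramer_apply]
  congr 1
  ext a (_ | k) <;> simp [augMatrix]

theorem augDetLin_single_of_notMem [DecidableEq ι] {g : Option κ → ι} {ρ : ι}
    (hρ : ρ ∉ Set.range g) : augDetLin U g (Pi.single ρ 1) = 0 := by
  rw [augDetLin_apply]
  refine det_eq_zero_of_column_eq_zero none fun a => ?_
  have : g a ≠ ρ := fun h => hρ ⟨a, h⟩
  simp [augMatrix, this]

theorem augDetLin_mulVec (g : Option κ → ι) (y : κ → R) : augDetLin U g (U *ᵥ y) = 0 := by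
  have h := det_updateCol_sum ((augMatrix U 0).submatrix g id) none (fun b => Option.elim b 0 y)
  rw [augDetLin_apply]
  convert h using 2
  · ext a (_ | k) <;> simp [augMatrix, Fintype.sum_option, mulVec, dotProduct, mul_comm]
  · simp

theorem abs_augDetLin_single [DecidableEq ι] [LinearOrder R] [IsStrictOrderedRing R]
    {g : Option κ → ι} (hg : Injective g) {h : κ → ι} (hh : Injective h) {ρ : ι}
    (hρ : ρ ∉ Set.range h) (hr : Set.range g = insert ρ (Set.range h)) :
    |augDetLin U g (Pi.single ρ 1)| = |(U.submatrix h id).det| := by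
  let g' : Option κ → ι := fun a => Option.elim a ρ h
  have hg' : Injective g' := by
    rintro (_ | a) (_ | b) hab
    · rfl
    · exact absurd ⟨b, hab.symm⟩ hρ
    · exact absurd ⟨a, hab⟩ hρ
    · exact congrArg some (hh hab)
  have hr' : Set.range g = Set.range g' := by
    ext i
    simp [hr, g', Option.exists, eq_comm]
  rw [augDetLin_apply, abs_det_submatrix_eq_of_range_eq _ hg hg' hr', det_eq_det_submatrix_some]
  · rfl
  · rintro (_ | a)
    · simp [g', augMatrix]
    · have : h a ≠ ρ := fun e => hρ ⟨a, e⟩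
      simp [g', augMatrix, this]

end AugmentedDeterminant

section Wdet

variable {ι κ : Type*} [Fintype κ] [DecidableEq κ]

theorem exists_augDetLin_eq_Wdet (U : Matrix ι κ ℝ) {S : Finset ι}
    (hS : S.card = Fintype.card (Option κ)) :
    ∃ g : Option κ → ι, Injective g ∧ Set.range g = ↑S ∧ ∀ x, Wdet U S x = augDetLin U g x := by
  let e := (Fintype.equivFinOfCardEq hS.symm).trans S.equivFin.symm
  refine ⟨fun a => e a, injective_coe_equiv e, range_coe_equiv e, fun x => ?_⟩
  rw [Wdet, dif_pos hS, augDetLin_apply]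
  rfl

theorem absDetRows_eq_abs_det (U : Matrix ι κ ℝ) {σ : Finset ι} {h : κ → ι} (hh : Injective h)
    (hr : Set.range h = ↑σ) : absDetRows U σ = |(U.submatrix h id).det| := by
  have hc := Finset.card_eq_of_range_eq hh hr
  let e := (Fintype.equivFinOfCardEq hc.symm).trans σ.equivFin.symm
  rw [absDetRows, dif_pos hc]
  exact abs_det_submatrix_eq_of_range_eq U (injective_coe_equiv e) hh
    ((range_coe_equiv e).trans hr.symm)

theorem abs_augDetLin_single_eq_absDetRows [DecidableEq ι] (U : Matrix ι κ ℝ)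
    {g : Option κ → ι} (hg : Injective g) {S : Finset ι} (hr : Set.range g = ↑S) {ρ : ι}
    (hρ : ρ ∈ S) : |augDetLin U g (Pi.single ρ 1)| = absDetRows U (S.erase ρ) := by
  obtain ⟨h, hh, hhr⟩ := (S.erase ρ).exists_injective_range_eq (α := κ) (by
    rw [Finset.card_erase_of_mem hρ, Finset.card_eq_of_range_eq hg hr, Fintype.card_option,
      Nat.add_sub_cancel])
  rw [absDetRows_eq_abs_det U hh hhr]
  refine abs_augDetLin_single U hg hh (by simp [hhr]) ?_
  rw [hhr, hr, Finset.coe_erase, Set.insert_sdiff_singleton,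
    Set.insert_eq_of_mem (Finset.mem_coe.2 hρ)]

end Wdet

namespace SimplicialFan

variable {ι κ : Type*} [Fintype ι] [DecidableEq ι] [Fintype κ] (F : SimplicialFan ι κ)

theorem card_le_of_mem_cones {σ : Finset ι} (hσ : σ ∈ F.cones) : σ.card ≤ Fintype.card κ := by
  simpa using (F.indep σ hσ).fintype_card_le_finrank

theorem det_submatrix_ne_zero [DecidableEq κ] {σ : Finset ι} (hσ : σ ∈ F.cones) {h : κ → ι}
    (hh : Injective h) (hr : Set.range h ⊆ ↑σ) : (F.U.submatrix h id).det ≠ 0 := by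
  have hli : LinearIndependent ℝ fun j => F.U (h j) :=
    (F.indep σ hσ).comp (fun j => ⟨h j, hr ⟨j, rfl⟩⟩) fun a b hab =>
      hh (congrArg Subtype.val hab)
  exact ((isUnit_iff_isUnit_det _).1 (linearIndependent_rows_iff_isUnit.1 hli)).ne_zero

theorem absDetRows_ne_zero [DecidableEq κ] {σ : Finset ι} (hσ : σ ∈ F.cones)
    (hc : σ.card = Fintype.card κ) : absDetRows F.U σ ≠ 0 := by
  obtain ⟨h, hh, hr⟩ := σ.exists_injective_range_eq hc
  rw [absDetRows_eq_abs_det F.U hh hr, abs_ne_zero]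
  exact F.det_submatrix_ne_zero hσ hh hr.subset

theorem eq_zero_of_mulVec_eq_zero_on {σ : Finset ι} (hσ : σ ∈ F.cones)
    (hc : σ.card = Fintype.card κ) {y : κ → ℝ} (hy : ∀ i ∈ σ, (F.U *ᵥ y) i = 0) : y = 0 := by
  classical
  obtain ⟨h, hh, hr⟩ := σ.exists_injective_range_eq hc
  refine eq_zero_of_mulVec_eq_zero (F.det_submatrix_ne_zero hσ hh hr.subset) ?_
  ext j
  exact hy _ (hr.subset ⟨j, rfl⟩)

end SimplicialFan

theorem SimplicialFan.subset_nbF_union {ι κ : Type*} [Fintype ι] [DecidableEq ι]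
    (F : SimplicialFan ι κ) {τ σ : Finset ι} (hσ : σ ∈ F.cones) (hτσ : τ ⊆ σ) :
    σ ⊆ nbF F.cones τ ∪ τ := by
  intro ρ hρ
  by_cases hρτ : ρ ∈ τ
  · exact Finset.mem_union_right _ hρτ
  · exact Finset.mem_union_left _ (Finset.mem_filter.2
      ⟨Finset.mem_univ ρ, hρτ, F.downward σ hσ _ (Finset.insert_subset hρ hτσ)⟩)

theorem Bornology.IsBounded.eq_zero_of_forall_add_smul_mem {E : Type*} [NormedAddCommGroup E]
    [NormedSpace ℝ E] {P : Set E} (hP : Bornology.IsBounded P) {v w : E}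
    (h : ∀ t : ℝ, 0 ≤ t → v + t • w ∈ P) : w = 0 := by
  by_contra hw
  obtain ⟨C, hC⟩ := isBounded_iff_forall_norm_le.1 hP
  have hw' : 0 < ‖w‖ := norm_pos_iff.2 hw
  have hv : ‖v‖ ≤ C := hC v (by simpa using h 0 le_rfl)
  set t := (2 * C + 1) / ‖w‖
  have ht : 0 ≤ t := div_nonneg (by linarith [norm_nonneg v]) hw'.le
  have htw : ‖t • w‖ = 2 * C + 1 := by
    rw [norm_smul, Real.norm_of_nonneg ht, div_mul_cancel₀ _ hw'.ne']
  have htri : ‖t • w‖ ≤ ‖v + t • w‖ + ‖v‖ := by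
    simpa using norm_sub_le (v + t • w) v
  linarith [hC _ (h t ht)]

section Polytope

variable {ι κ : Type*} [Fintype κ]

noncomputable def tightSet [Fintype ι] (U : Matrix ι κ ℝ) (z : ι → ℝ) (v : κ → ℝ) : Finset ι :=
  {i | (U *ᵥ v + z) i = 0}

variable {U : Matrix ι κ ℝ} {z : ι → ℝ} {v w : κ → ℝ}

theorem mem_tightSet [Fintype ι] {i : ι} : i ∈ tightSet U z v ↔ (U *ᵥ v + z) i = 0 := by
  simp [tightSet]

theorem mulVec_add_smul_add (t : ℝ) : U *ᵥ (v + t • w) + z = U *ᵥ v + z + t • U *ᵥ w := by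
  rw [mulVec_add, mulVec_smul]
  abel

theorem mem_tightSet_add_smul [Fintype ι] {i : ι} (hi : i ∈ tightSet U z v)
    (hw : (U *ᵥ w) i = 0) (t : ℝ) : i ∈ tightSet U z (v + t • w) := by
  rw [mem_tightSet, mulVec_add_smul_add]
  rw [mem_tightSet] at hi
  simp [hi, hw]

theorem tightSet_mem_cones [Fintype ι] [DecidableEq ι] {F : SimplicialFan ι κ}
    (hz : IsNormalFanOf F z) (hv : v ∈ Pz F.U z) : tightSet F.U z v ∈ F.cones :=
  (hz.2.2 _).2 ⟨v, hv, fun _ hi => mem_tightSet.1 hi⟩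

theorem exists_ne_zero_mulVec_eq_zero_on (U : Matrix ι κ ℝ) {A : Finset ι}
    (hA : A.card < Fintype.card κ) : ∃ w ≠ 0, ∀ i ∈ A, (U *ᵥ w) i = 0 := by
  have : LinearMap.ker (U.submatrix (Subtype.val : A → ι) id).mulVecLin ≠ ⊥ :=
    LinearMap.ker_ne_bot_of_finrank_lt (by simpa using hA)
  obtain ⟨w, hw, hw0⟩ := (Submodule.ne_bot_iff _).1 this
  exact ⟨w, hw0, fun i hi => congrFun (LinearMap.mem_ker.1 hw) ⟨i, hi⟩⟩

variable [Fintype ι]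

theorem exists_pos_smul_mem_tightSet (hB : Bornology.IsBounded (Pz U z)) (hv : v ∈ Pz U z)
    (hw : w ≠ 0) (hvw : ∀ i ∈ tightSet U z v, 0 ≤ (U *ᵥ w) i) :
    ∃ t : ℝ, 0 < t ∧ v + t • w ∈ Pz U z ∧
      ∃ i, (U *ᵥ w) i < 0 ∧ i ∈ tightSet U z (v + t • w) := by
  set s := U *ᵥ v + z
  set a := U *ᵥ w
  have hs : 0 ≤ s := hv
  have slack (t : ℝ) (i : ι) : (U *ᵥ (v + t • w) + z) i = s i + t * a i := by
    rw [mulVec_add_smul_add]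
    rfl
  -- ratio test: the ray leaves the bounded `P_z` through a facet minimizing `s i / -a i`
  obtain ⟨i₀, hi₀, hmin⟩ := Finset.exists_min_image {i | a i < 0} (fun i => s i / -a i) (by
    by_contra! hempty
    refine hw (hB.eq_zero_of_forall_add_smul_mem (v := v) fun t ht i => ?_)
    have : 0 ≤ a i := not_lt.1 fun hi =>
      Finset.notMem_empty i (hempty ▸ Finset.mem_filter.2 ⟨Finset.mem_univ i, hi⟩)
    change 0 ≤ (U *ᵥ (v + t • w) + z) i
    rw [slack]
    exact add_nonneg (hs i) (mul_nonneg ht this))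
  have ha₀ : a i₀ < 0 := by simpa using hi₀
  have hs₀ : 0 < s i₀ := (hs i₀).lt_of_ne' fun h => ha₀.not_ge (hvw i₀ (mem_tightSet.2 h))
  have ht : 0 < s i₀ / -a i₀ := div_pos hs₀ (neg_pos.2 ha₀)
  refine ⟨s i₀ / -a i₀, ht, fun i => ?_, i₀, ha₀, ?_⟩
  · change 0 ≤ (U *ᵥ (v + _ • w) + z) i
    rw [slack]
    rcases le_or_gt 0 (a i) with hai | hai
    · exact add_nonneg (hs i) (mul_nonneg ht.le hai)
    · have := (le_div_iff₀ (neg_pos.2 hai)).1 (hmin i (by simpa using hai))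
      linarith
  · rw [mem_tightSet, slack, div_neg, neg_mul, div_mul_cancel₀ _ ha₀.ne, add_neg_cancel]

end Polytope

section NormalFan

variable {ι κ : Type*} [Fintype ι] [DecidableEq ι] [Fintype κ] {F : SimplicialFan ι κ}
  {z : ι → ℝ}

theorem exists_vertex_tightSet_superset (hz : IsNormalFanOf F z) {v : κ → ℝ}
    (hv : v ∈ Pz F.U z) : ∃ v' ∈ Pz F.U z, tightSet F.U z v ⊆ tightSet F.U z v' ∧
      (tightSet F.U z v').card = Fintype.card κ := by
  induction hm : Fintype.card κ - (tightSet F.U z v).card using Nat.strong_induction_on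
    generalizing v with
  | _ m ih =>
  rcases (F.card_le_of_mem_cones (tightSet_mem_cones hz hv)).eq_or_lt with hd | hlt
  · exact ⟨v, hv, subset_rfl, hd⟩
  obtain ⟨w, hw, hwv⟩ := exists_ne_zero_mulVec_eq_zero_on F.U hlt
  obtain ⟨t, -, hv', i, hi, hit⟩ :=
    exists_pos_smul_mem_tightSet hz.1 hv hw fun i hi => (hwv i hi).ge
  have hsub : tightSet F.U z v ⊆ tightSet F.U z (v + t • w) :=
    fun j hj => mem_tightSet_add_smul hj (hwv j hj) t
  have hgrow := Finset.card_lt_card ⟨hsub, fun h => hi.ne (hwv i (h hit))⟩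
  obtain ⟨v'', hv'', hsub', hcard⟩ := ih _ (by omega) hv' rfl
  exact ⟨v'', hv'', hsub.trans hsub', hcard⟩

theorem exists_adjacent_vertex (hz : IsNormalFanOf F z) {v : κ → ℝ} (hv : v ∈ Pz F.U z)
    (hvd : (tightSet F.U z v).card = Fintype.card κ) {ρ : ι} (hρ : ρ ∈ tightSet F.U z v) :
    ∃ v' ∈ Pz F.U z, (tightSet F.U z v).erase ρ ⊆ tightSet F.U z v' ∧
      ρ ∉ tightSet F.U z v' ∧ Fintype.card κ ≤ (tightSet F.U z v').card := by
  set σ := tightSet F.U z v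
  obtain ⟨w₀, hw₀, hw₀σ⟩ := exists_ne_zero_mulVec_eq_zero_on F.U (A := σ.erase ρ)
    (by rw [Finset.card_erase_of_mem hρ]; have := Finset.card_pos.2 ⟨ρ, hρ⟩; omega)
  have hρw₀ : (F.U *ᵥ w₀) ρ ≠ 0 := fun h0 => hw₀ <|
    F.eq_zero_of_mulVec_eq_zero_on (tightSet_mem_cones hz hv) hvd fun i hi =>
      if hiρ : i = ρ then hiρ ▸ h0 else hw₀σ i (Finset.mem_erase.2 ⟨hiρ, hi⟩)
  -- rescaling by `(U w₀)_ρ` makes the edge direction leave the facet `ρ` inwards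
  obtain ⟨w, hw, hwσ, hwρ⟩ : ∃ w : κ → ℝ, w ≠ 0 ∧ (∀ i ∈ σ.erase ρ, (F.U *ᵥ w) i = 0) ∧
      0 < (F.U *ᵥ w) ρ :=
    ⟨(F.U *ᵥ w₀) ρ • w₀, smul_ne_zero hρw₀ hw₀, fun i hi => by simp [mulVec_smul, hw₀σ i hi],
      by simpa [mulVec_smul] using mul_self_pos.2 hρw₀⟩
  obtain ⟨t, ht, hv', i₀, hi₀, hi₀t⟩ := exists_pos_smul_mem_tightSet hz.1 hv hw fun i hi =>
    if hiρ : i = ρ then by rw [hiρ]; exact hwρ.le else (hwσ i (Finset.mem_erase.2 ⟨hiρ, hi⟩)).ge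
  have hsub : σ.erase ρ ⊆ tightSet F.U z (v + t • w) :=
    fun i hi => mem_tightSet_add_smul (Finset.mem_of_mem_erase hi) (hwσ i hi) t
  refine ⟨v + t • w, hv', hsub, fun hρt => ?_, ?_⟩
  · rw [mem_tightSet, mulVec_add_smul_add] at hρt
    have : (F.U *ᵥ v + z) ρ = 0 := mem_tightSet.1 hρ
    simp only [Pi.add_apply, Pi.smul_apply, smul_eq_mul, this, zero_add] at hρt
    exact (mul_pos ht hwρ).ne' hρt
  · have hi₀σ : i₀ ∉ σ.erase ρ := fun h => hi₀.ne (hwσ i₀ h)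
    have := Finset.card_le_card (Finset.insert_subset hi₀t hsub)
    rw [Finset.card_insert_of_notMem hi₀σ, Finset.card_erase_of_mem hρ, hvd] at this
    omega

variable {τ : Finset ι}

theorem erase_mem_cones (hz : IsNormalFanOf F z) (hτ : τ ∈ F.cones)
    (hS : (nbF F.cones τ ∪ τ).card = Fintype.card κ + 1) {ρ : ι} (hρ : ρ ∈ nbF F.cones τ) :
    (nbF F.cones τ ∪ τ).erase ρ ∈ F.cones := by
  have hρτ : ρ ∉ τ := (Finset.mem_filter.1 hρ).2.1
  have hρS : ρ ∈ nbF F.cones τ ∪ τ := Finset.mem_union_left _ hρ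
  obtain ⟨y, hy, hyτ⟩ := (hz.2.2 τ).1 hτ
  obtain ⟨v, hv, hyv, hvd⟩ := exists_vertex_tightSet_superset hz hy
  have hτv : τ ⊆ tightSet F.U z v := fun i hi => hyv (mem_tightSet.2 (hyτ i hi))
  by_cases hρv : ρ ∈ tightSet F.U z v
  · obtain ⟨v', hv', hsub, hρv', hcard⟩ := exists_adjacent_vertex hz hv hvd hρv
    have hτv' : τ ⊆ tightSet F.U z v' :=
      fun i hi => hsub (Finset.mem_erase.2 ⟨ne_of_mem_of_not_mem hi hρτ, hτv hi⟩)
    have hmem := tightSet_mem_cones hz hv'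
    rw [← Finset.eq_erase_of_subset_of_notMem (F.subset_nbF_union hmem hτv') hρS hρv' (by omega)]
    exact hmem
  · have hmem := tightSet_mem_cones hz hv
    rw [← Finset.eq_erase_of_subset_of_notMem (F.subset_nbF_union hmem hτv) hρS hρv (by omega)]
    exact hmem

end NormalFan

theorem apply_eq_zero_of_mem_span_single {ι : Type*} [DecidableEq ι] {T : Finset ι} {x : ι → ℝ}
    (hx : x ∈ Submodule.span ℝ ((fun ρ => (Pi.single ρ 1 : ι → ℝ)) '' ↑T)) {ρ : ι} (hρ : ρ ∉ T) :
    x ρ = 0 := by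
  refine (Submodule.span_le (p := LinearMap.ker (LinearMap.proj ρ)).2 ?_ hx :)
  rintro _ ⟨i, hi, rfl⟩
  simp [ne_of_mem_of_not_mem hi hρ]

theorem LinearMap.apply_eq_sum_mul_single {ι R : Type*} [Fintype ι] [DecidableEq ι] [CommSemiring R]
    (W : (ι → R) →ₗ[R] R) (x : ι → R) : W x = ∑ ρ, x ρ * W (Pi.single ρ 1) := by
  conv_lhs => rw [pi_eq_sum_univ' x]
  simp [map_sum]

theorem finrank_ker_eq_card_sub_one {ι : Type*} [Fintype ι] {W : (ι → ℝ) →ₗ[ℝ] ℝ} (hW : W ≠ 0) :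
    Module.finrank ℝ (LinearMap.ker W) = Fintype.card ι - 1 := by
  have := Module.Dual.finrank_ker_add_one_of_ne_zero hW
  simp only [Module.finrank_fintype_fun_eq_card] at this
  omega

theorem finrank_span_single_image {ι : Type*} [DecidableEq ι] (T : Finset ι) :
    Module.finrank ℝ (Submodule.span ℝ ((fun ρ => (Pi.single ρ 1 : ι → ℝ)) '' ↑T)) = T.card := by
  rw [Set.image_eq_range]
  exact (finrank_span_eq_card ((Pi.linearIndependent_single_one ι ℝ).comp _
    Subtype.val_injective)).trans (by simp)

theorem span_single_sup_range_eq_ker {ι κ : Type*} [Fintype ι] [DecidableEq ι] [Fintype κ]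
    {U : Matrix ι κ ℝ} {S : Finset ι} {W : (ι → ℝ) →ₗ[ℝ] ℝ} (hW : W ≠ 0)
    (hS : S.card = Fintype.card κ + 1)
    (hWS : ∀ ρ ∉ S, W (Pi.single ρ 1) = 0) (hWU : ∀ y, W (U *ᵥ y) = 0)
    (hU : ∀ y, (∀ i ∈ S, (U *ᵥ y) i = 0) → y = 0) :
    Submodule.span ℝ ((fun ρ => (Pi.single ρ 1 : ι → ℝ)) '' ↑Sᶜ) ⊔
      LinearMap.range U.mulVecLin = LinearMap.ker W := by
  set A := Submodule.span ℝ ((fun ρ => (Pi.single ρ 1 : ι → ℝ)) '' ↑Sᶜ)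
  set B := LinearMap.range U.mulVecLin
  have hAB : A ⊓ B = ⊥ := by
    refine (Submodule.eq_bot_iff _).2 ?_
    rintro _ ⟨hxA, y, rfl⟩
    rw [hU y fun i hi => apply_eq_zero_of_mem_span_single hxA (by simpa using hi), map_zero]
  have hB : Module.finrank ℝ B = Fintype.card κ := by
    have hinj : Injective U.mulVecLin := LinearMap.ker_eq_bot.1 <|
      (Submodule.eq_bot_iff _).2 fun y hy => hU y fun i _ => congrFun (LinearMap.mem_ker.1 hy) i
    rw [LinearMap.finrank_range_of_inj hinj]
    simp
  have hle : A ⊔ B ≤ LinearMap.ker W := sup_le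
    (Submodule.span_le.2 <| by rintro _ ⟨ρ, hρ, rfl⟩; exact hWS ρ (by simpa using hρ))
    (by rintro _ ⟨y, rfl⟩; exact hWU y)
  refine Submodule.eq_of_le_of_finrank_le hle ?_
  have hdim := Submodule.finrank_sup_add_finrank_inf_eq A B
  rw [hAB, finrank_bot, finrank_span_single_image, hB, Finset.card_compl, hS] at hdim
  have := S.card_le_univ
  rw [finrank_ker_eq_card_sub_one hW]
  omega

section SimplexFace

variable {ι κ : Type*} [Fintype ι] [DecidableEq ι] [Fintype κ] {F : SimplicialFan ι κ}
  {z : ι → ℝ} {τ : Finset ι}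

theorem exists_abs_map_single_eq_mul (hz : IsNormalFanOf F z) (hτ : τ ∈ F.cones)
    (hS : (nbF F.cones τ ∪ τ).card = Fintype.card κ + 1) {W : (ι → ℝ) →ₗ[ℝ] ℝ}
    (hWS : ∀ ρ ∉ nbF F.cones τ ∪ τ, W (Pi.single ρ 1) = 0) (hWU : ∀ y, W (F.U *ᵥ y) = 0) :
    ∃ ε : ℝ, ∀ ρ ∈ nbF F.cones τ, |W (Pi.single ρ 1)| = ε * W (Pi.single ρ 1) := by
  refine ⟨SignType.sign (W z), fun ρ hρ => ?_⟩
  obtain ⟨v, hv, hvS⟩ := (hz.2.2 _).1 (erase_mem_cones hz hτ hS hρ)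
  set s := F.U *ᵥ v + z
  have hsρ : 0 < s ρ := by
    refine (hv ρ).lt_of_ne' fun h0 => ?_
    have hsub : nbF F.cones τ ∪ τ ⊆ tightSet F.U z v := fun i hi => mem_tightSet.2 <|
      if hiρ : i = ρ then hiρ ▸ h0 else hvS i (Finset.mem_erase.2 ⟨hiρ, hi⟩)
    have := F.card_le_of_mem_cones (F.downward _ (tightSet_mem_cones hz hv) _ hsub)
    omega
  -- `v` is the vertex where all slacks in `S ∖ {ρ}` vanish, so `W s` only sees the `ρ`-th one
  have hWs : W s = s ρ * W (Pi.single ρ 1) := by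
    rw [W.apply_eq_sum_mul_single]
    refine Fintype.sum_eq_single ρ fun i hi => ?_
    by_cases hiS : i ∈ nbF F.cones τ ∪ τ
    · rw [show s i = 0 from hvS i (Finset.mem_erase.2 ⟨hi, hiS⟩), zero_mul]
    · rw [hWS i hiS, mul_zero]
  have hWz : W s = W z := by rw [map_add, hWU, zero_add]
  rw [← hWz, hWs, sign_mul, sign_pos hsρ, one_mul, sign_mul_self]

theorem filter_maximal_cones_supset_eq_image (hz : IsNormalFanOf F z) (hτ : τ ∈ F.cones)
    (hS : (nbF F.cones τ ∪ τ).card = Fintype.card κ + 1) :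
    ((F.cones.filter fun σ => σ.card = Fintype.card κ).filter fun σ => τ ⊆ σ) =
      (nbF F.cones τ).image ((nbF F.cones τ ∪ τ).erase ·) := by
  ext σ
  simp only [Finset.mem_filter, Finset.mem_image]
  constructor
  · rintro ⟨⟨hσ, hσd⟩, hτσ⟩
    have hσS := F.subset_nbF_union hσ hτσ
    obtain ⟨ρ, hρS, hρσ⟩ := Finset.exists_mem_notMem_of_card_lt_card (s := σ)
      (t := nbF F.cones τ ∪ τ) (by omega)
    exact ⟨ρ, (Finset.mem_union.1 hρS).resolve_right fun h => hρσ (hτσ h),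
      (Finset.eq_erase_of_subset_of_notMem hσS hρS hρσ (by omega)).symm⟩
  · rintro ⟨ρ, hρ, rfl⟩
    refine ⟨⟨erase_mem_cones hz hτ hS hρ, ?_⟩, fun i hi => Finset.mem_erase.2
      ⟨ne_of_mem_of_not_mem hi (Finset.mem_filter.1 hρ).2.1, Finset.mem_union_right _ hi⟩⟩
    rw [Finset.card_erase_of_mem (Finset.mem_union_left _ hρ), hS, Nat.add_sub_cancel]

theorem eval_Adj_eq [DecidableEq κ] (hz : IsNormalFanOf F z) (hτ : τ ∈ F.cones)
    (hS : (nbF F.cones τ ∪ τ).card = Fintype.card κ + 1) {x : ι → ℝ} (hx : ∀ ρ ∈ τ, x ρ = 0) :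
    MvPolynomial.eval x (Adj F.U F.cones) =
      (∑ ρ ∈ nbF F.cones τ, absDetRows F.U ((nbF F.cones τ ∪ τ).erase ρ) * x ρ) *
        ∏ ρ ∈ (nbF F.cones τ ∪ τ)ᶜ, x ρ := by
  have hvanish : ∀ σ ∈ F.cones.filter fun σ => σ.card = Fintype.card κ,
      MvPolynomial.eval x (C (absDetRows F.U σ) * ∏ ρ ∈ σᶜ, X ρ) ≠ 0 → τ ⊆ σ := by
    intro σ _ hne ρ hρ
    by_contra hρσ
    exact hne (by simp [Finset.prod_eq_zero (Finset.mem_compl.2 hρσ) (hx ρ hρ)])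
  rw [Adj, map_sum, ← Finset.sum_filter_of_ne hvanish,
    filter_maximal_cones_supset_eq_image hz hτ hS,
    Finset.sum_image ((Finset.erase_injOn _).mono (Finset.coe_subset.2 Finset.subset_union_left)),
    Finset.sum_mul]
  refine Finset.sum_congr rfl fun ρ hρ => ?_
  rw [Finset.compl_erase, Finset.prod_insert (Finset.notMem_compl.2 (Finset.mem_union_left _ hρ))]
  simp only [compl_union, map_mul, eval_C, eval_X, map_prod]
  ring

theorem eval_Adj_eq_zero [DecidableEq κ] (hz : IsNormalFanOf F z) (hτ : τ ∈ F.cones)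
    (hS : (nbF F.cones τ ∪ τ).card = Fintype.card κ + 1) {W : (ι → ℝ) →ₗ[ℝ] ℝ}
    (hWS : ∀ ρ ∉ nbF F.cones τ ∪ τ, W (Pi.single ρ 1) = 0) (hWU : ∀ y, W (F.U *ᵥ y) = 0)
    (habs : ∀ ρ ∈ nbF F.cones τ,
      |W (Pi.single ρ 1)| = absDetRows F.U ((nbF F.cones τ ∪ τ).erase ρ))
    {x : ι → ℝ} (hWx : W x = 0) (hx : ∀ ρ ∈ τ, x ρ = 0) :
    MvPolynomial.eval x (Adj F.U F.cones) = 0 := by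
  obtain ⟨ε, hε⟩ := exists_abs_map_single_eq_mul hz hτ hS hWS hWU
  have hWx' : ∑ ρ ∈ nbF F.cones τ, x ρ * W (Pi.single ρ 1) = 0 := by
    rw [← hWx, W.apply_eq_sum_mul_single]
    refine Finset.sum_subset (Finset.subset_univ _) fun ρ _ hρ => ?_
    by_cases hρτ : ρ ∈ τ
    · rw [hx ρ hρτ, zero_mul]
    · rw [hWS ρ (by simp [hρ, hρτ]), mul_zero]
  have hsum : ∑ ρ ∈ nbF F.cones τ, absDetRows F.U ((nbF F.cones τ ∪ τ).erase ρ) * x ρ =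
      ε * ∑ ρ ∈ nbF F.cones τ, x ρ * W (Pi.single ρ 1) := by
    rw [Finset.mul_sum]
    refine Finset.sum_congr rfl fun ρ hρ => ?_
    rw [← habs ρ hρ, hε ρ hρ]
    ring
  rw [eval_Adj_eq hz hτ hS hx, hsum, hWx', mul_zero, zero_mul]

end SimplexFace

theorem statement13_general {ι κ : Type*} [Fintype ι] [DecidableEq ι] [Fintype κ] [DecidableEq κ]
    (F : SimplicialFan ι κ)
    (z : ι → ℝ) (hz : IsNormalFanOf F z)
    (k : ℕ) (τ : Finset ι) (hτ : τ ∈ F.cones) (hcard : τ.card = k)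
    (hsimplex : (nbF F.cones τ).card = Fintype.card κ - k + 1) :
    (∀ x : ι → ℝ, Wdet F.U (nbF F.cones τ ∪ τ) x = 0 → (∀ ρ ∈ τ, x ρ = 0) →
      MvPolynomial.eval x (Adj F.U F.cones) = 0) ∧
    {x : ι → ℝ | Wdet F.U (nbF F.cones τ ∪ τ) x = 0} =
      ↑(Submodule.span ℝ ((fun ρ => (Pi.single ρ 1 : ι → ℝ)) '' ↑((nbF F.cones τ ∪ τ)ᶜ)) ⊔
          LinearMap.range F.U.mulVecLin) ∧
    Module.finrank ℝ
        ↥(Submodule.span ℝ ((fun ρ => (Pi.single ρ 1 : ι → ℝ)) '' ↑((nbF F.cones τ ∪ τ)ᶜ)) ⊔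
            LinearMap.range F.U.mulVecLin) =
      Fintype.card ι - 1 := by
  have hS : (nbF F.cones τ ∪ τ).card = Fintype.card κ + 1 := by
    have := F.card_le_of_mem_cones hτ
    rw [Finset.card_union_of_disjoint
      (Finset.disjoint_left.2 fun ρ hρ => (Finset.mem_filter.1 hρ).2.1), hsimplex, hcard]
    omega
  obtain ⟨ρ₀, hρ₀⟩ : (nbF F.cones τ).Nonempty := Finset.card_pos.1 (by omega)
  have hmax := erase_mem_cones hz hτ hS hρ₀
  have hmaxd : ((nbF F.cones τ ∪ τ).erase ρ₀).card = Fintype.card κ := by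
    rw [Finset.card_erase_of_mem (Finset.mem_union_left _ hρ₀), hS, Nat.add_sub_cancel]
  obtain ⟨g, hg, hgS, hWg⟩ := exists_augDetLin_eq_Wdet F.U (by rwa [Fintype.card_option])
  set W := augDetLin F.U g
  have hWS : ∀ ρ ∉ nbF F.cones τ ∪ τ, W (Pi.single ρ 1) = 0 :=
    fun ρ hρ => augDetLin_single_of_notMem F.U (by rwa [hgS])
  have habs : ∀ ρ ∈ nbF F.cones τ,
      |W (Pi.single ρ 1)| = absDetRows F.U ((nbF F.cones τ ∪ τ).erase ρ) :=
    fun ρ hρ => abs_augDetLin_single_eq_absDetRows F.U hg hgS (Finset.mem_union_left _ hρ)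
  have hW : W ≠ 0 := fun h => F.absDetRows_ne_zero hmax hmaxd (by simp [← habs ρ₀ hρ₀, h])
  have hker := span_single_sup_range_eq_ker hW hS hWS (augDetLin_mulVec F.U g) fun y hy =>
    F.eq_zero_of_mulVec_eq_zero_on hmax hmaxd fun i hi => hy i (Finset.mem_of_mem_erase hi)
  refine ⟨fun x hWx hx => eval_Adj_eq_zero hz hτ hS hWS (augDetLin_mulVec F.U g) habs
    (by rwa [← hWg]) hx, ?_, ?_⟩
  · ext x
    rw [Set.mem_ofPred_eq, hWg, SetLike.mem_coe, hker, LinearMap.mem_ker]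
  · rw [hker, finrank_ker_eq_card_sub_one hW]

/-- Let `Δ` be a face of the simple polytope `P` which is a simplex of
dimension `d - k > 0`, with normal cone `τ = σ_Δ ∈ Σ(k)`. Then the linear subspace
`{W_Δ(x) = 0, x_ρ = 0 (ρ ∈ τ)}` (of projective dimension `n - k - 2`) is contained in
the adjoint hypersurface `A_Σ`; moreover the hyperplane `{W_Δ(x) = 0} ⊆ ℝⁿ` equals
`span(e_ρ : ρ ∈ K_Δ) + im(U)` with `K_Δ = Σ(1) ∖ (nb(Δ) ∪ σ_Δ(1))` — the linear span
of an `(n-1)`-dimensional cone of the chamber complex `Ch(U)`, so the subspace is also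
contained in the projectivized Zariski closure of the `(n-1)`-skeleton of `Ch(U)`. -/
theorem statement13 {ι κ : Type*} [Fintype ι] [DecidableEq ι] [Fintype κ] [DecidableEq κ]
    (F : SimplicialFan ι κ) (hrank : F.U.rank = Fintype.card κ)
    (z : ι → ℝ) (hz : IsNormalFanOf F z)
    (k : ℕ) (τ : Finset ι) (hτ : τ ∈ F.cones) (hcard : τ.card = k) (hk : k < Fintype.card κ)
    (hsimplex : (nbF F.cones τ).card = Fintype.card κ - k + 1) :
    (∀ x : ι → ℝ, Wdet F.U (nbF F.cones τ ∪ τ) x = 0 → (∀ ρ ∈ τ, x ρ = 0) →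
      MvPolynomial.eval x (Adj F.U F.cones) = 0) ∧
    {x : ι → ℝ | Wdet F.U (nbF F.cones τ ∪ τ) x = 0} =
      ↑(Submodule.span ℝ ((fun ρ => (Pi.single ρ 1 : ι → ℝ)) '' ↑((nbF F.cones τ ∪ τ)ᶜ)) ⊔
          LinearMap.range F.U.mulVecLin) ∧
    Module.finrank ℝ
        ↥(Submodule.span ℝ ((fun ρ => (Pi.single ρ 1 : ι → ℝ)) '' ↑((nbF F.cones τ ∪ τ)ᶜ)) ⊔
            LinearMap.range F.U.mulVecLin) =
      Fintype.card ι - 1 :=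
  statement13_general F z hz k τ hτ hcard hsimplex
end

section
/- Let Σ be a simplicial polyhedral fan in ℝ^d with n rays and ray matrix U of rank d, and let J ∈ Σ^c be a primitive collection. For ρ ∈ J, let τ_ρ ∈ Σ(|J|−1) be the cone generated by J∖{ρ}. Then the intersection Sing(A_Σ) ∩ Λ_J is cut out by the 2·|J| equations: x_ρ = 0 and (∏_{ρ′ ∉ nb(τ_ρ), ρ′ ∉ J} x_{ρ′}) · Adj_{Σ_{τ_ρ},U_{τ_ρ}} = 0, for all ρ ∈ J. In particular, if Σ is the normal fan of a simple d-dimensional polytope P with facet set indexed by J, and Δ_Q = ∩_{Q′∈J∖{Q}} Q′ for Q ∈ J, then Sing(A_P) ∩ Λ_J is cut out by x_Q = 0 and (∏_{Q′: Q′∩Δ_Q=∅, Q′∉J} x_{Q′}) · Adj_{Δ_Q,U_{Δ_Q}} = 0 for all Q ∈ J. -/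
open MvPolynomial Finset MeasureTheory
open scoped ENNReal

/-!
On `Λ_J` the partial derivative `∂_ρ Adj_Σ = ∑_{σ ∌ ρ} |det U_σ| ∏_{σᶜ ∖ {ρ}} x` keeps only the
terms with `J ∖ {ρ} ⊆ σ`, since any other term contains a factor `x_{ρ'}` with `ρ' ∈ J`. As `J`
lies in no cone, nothing survives when `ρ ∉ J`, while for `ρ ∈ J` the surviving maximal cones
`σ ⊇ τ_ρ` correspond bijectively to the maximal cones `σ ∖ τ_ρ` of the star fan. After the change
of coordinates `T_ρ` the rays of `τ_ρ` become standard basis vectors, so `U_σ T_ρ` is block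
triangular with an identity block and the star-fan matrix of `σ ∖ τ_ρ` on the diagonal: the
star-fan determinant is `|det T_ρ| |det U_σ|`. Since `σᶜ ∖ {ρ}` splits as
`(nb(τ_ρ) ∪ J)ᶜ ⊔ (nb(τ_ρ) ∖ σ)`, on `Λ_J` the `ρ`-th star equation is `|det T_ρ| ∂_ρ Adj_Σ`.
-/

namespace MvPolynomial

variable {σ R : Type*} [CommSemiring R] [DecidableEq σ]

lemma pderiv_prod_X (s : Finset σ) (i : σ) :
    pderiv i (∏ j ∈ s, X j : MvPolynomial σ R) =
      if i ∈ s then ∏ j ∈ s.erase i, X j else 0 := by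
  induction s using Finset.induction with
  | empty => simp
  | @insert a s ha ih =>
    rw [Finset.prod_insert ha, pderiv_mul, ih, pderiv_X]
    by_cases hia : i = a
    · subst hia
      simp [ha]
    · rw [Finset.erase_insert_of_ne (Ne.symm hia)]
      by_cases hs : i ∈ s <;> simp [hs, hia, Ne.symm hia, Finset.prod_insert, ha]

end MvPolynomial

section Adjoint

variable {ι κ A : Type*} [Fintype ι] [DecidableEq ι] [Fintype κ] [DecidableEq κ]
  [CommRing A] [Algebra ℝ A]

lemma aeval_pderiv_Adj (U : Matrix ι κ ℝ) (cones : Finset (Finset ι)) (x : ι → A) (ρ : ι) :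
    aeval x (pderiv ρ (Adj U cones)) =
      ∑ σ ∈ cones with σ.card = Fintype.card κ ∧ ρ ∉ σ,
        algebraMap ℝ A (absDetRows U σ) * ∏ ρ' ∈ σᶜ.erase ρ, x ρ' := by
  rw [Adj, map_sum, map_sum, ← Finset.filter_filter]
  conv_rhs => rw [Finset.sum_filter]
  refine Finset.sum_congr rfl fun σ _ => ?_
  rw [pderiv_C_mul, pderiv_prod_X]
  split_ifs <;> simp_all [map_prod]

lemma aeval_pderiv_Adj_of_forall_eq_zero (U : Matrix ι κ ℝ) (cones : Finset (Finset ι))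
    {J : Finset ι} {x : ι → A} (hx : ∀ ρ ∈ J, x ρ = 0) (ρ : ι) :
    aeval x (pderiv ρ (Adj U cones)) =
      ∑ σ ∈ cones with σ.card = Fintype.card κ ∧ ρ ∉ σ ∧ J.erase ρ ⊆ σ,
        algebraMap ℝ A (absDetRows U σ) * ∏ ρ' ∈ σᶜ.erase ρ, x ρ' := by
  rw [aeval_pderiv_Adj, Finset.sum_filter, Finset.sum_filter]
  refine Finset.sum_congr rfl fun σ _ => ?_
  by_cases hτσ : J.erase ρ ⊆ σ
  · simp [hτσ]
  · obtain ⟨ρ', hρ'J, hρ'σ⟩ := Finset.not_subset.1 hτσ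
    have hρ' : ρ' ∈ σᶜ.erase ρ :=
      Finset.mem_erase.2 ⟨Finset.ne_of_mem_erase hρ'J, Finset.mem_compl.2 hρ'σ⟩
    simp [hτσ, Finset.prod_eq_zero hρ' (hx ρ' (Finset.mem_of_mem_erase hρ'J))]

lemma aeval_pderiv_Adj_eq_zero_of_notMem (U : Matrix ι κ ℝ) {cones : Finset (Finset ι)}
    {J : Finset ι} (hJ : ∀ σ ∈ cones, ¬ J ⊆ σ) {x : ι → A} (hx : ∀ ρ ∈ J, x ρ = 0) {ρ : ι}
    (hρ : ρ ∉ J) : aeval x (pderiv ρ (Adj U cones)) = 0 := by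
  rw [aeval_pderiv_Adj_of_forall_eq_zero U cones hx, Finset.erase_eq_of_notMem hρ]
  exact Finset.sum_eq_zero fun σ hσ =>
    absurd (Finset.mem_filter.1 hσ).2.2.2 (hJ σ (Finset.mem_filter.1 hσ).1)

end Adjoint

lemma absDetRows_eq_abs_det_submatrix {ι κ κ' : Type*} [Fintype κ] [DecidableEq κ] [Fintype κ']
    [DecidableEq κ'] (U : Matrix ι κ ℝ) {σ : Finset ι} (hσ : σ.card = Fintype.card κ) {e : κ' → ι}
    (he : Function.Injective e) (heσ : ∀ j, e j ∈ σ) (c : κ' ≃ κ) :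
    absDetRows U σ = |(U.submatrix e c).det| := by
  let E₀ : κ ≃ σ := (Fintype.equivFinOfCardEq hσ.symm).trans σ.equivFin.symm
  let E : κ' ≃ σ := Equiv.ofBijective (fun j => ⟨e j, heσ j⟩)
    ((Fintype.bijective_iff_injective_and_card _).2
      ⟨fun a b hab => he (congrArg Subtype.val hab), by simp [Fintype.card_congr c, hσ]⟩)
  have hrows : U.submatrix e c =
      (Matrix.of fun j k : κ => U (E₀ j : ι) k).submatrix (E.trans E₀.symm) c := by
    ext j k
    simp [E, E₀]
  rw [absDetRows, dif_pos hσ, hrows, Matrix.abs_det_submatrix_equiv_equiv]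
  rfl

section StarFan

variable {ι : Type*} [DecidableEq ι] {d k : ℕ}

lemma Fintype.card_fin_ge_of_le (h : k ≤ d) : Fintype.card {j : Fin d // k ≤ (j : ℕ)} = d - k := by
  simp_rw [← not_lt]
  rw [Fintype.card_subtype_compl, Fintype.card_fin, Fintype.card_fin_lt_of_le h]

lemma absDetRows_starU {U : Matrix ι (Fin d) ℝ} {T : Matrix (Fin d) (Fin d) ℝ}
    {τ N σ : Finset ι} (hT : RowsStd U T τ k) (hk : τ.card = k) (hτσ : τ ⊆ σ)
    (hσN : σ \ τ ⊆ N) (hσ : σ.card = d) :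
    absDetRows (starU U T N k) ((σ \ τ).subtype (· ∈ N)) = |T.det| * absDetRows U σ := by
  obtain ⟨g, hg, hgk, hrows⟩ := hT
  have hkd : k ≤ d := hk ▸ hσ ▸ Finset.card_le_card hτσ
  let c : {j : Fin d // (j : ℕ) < k} ⊕ {j : Fin d // k ≤ (j : ℕ)} ≃ Fin d :=
    (Equiv.sumCongr (Equiv.refl _) (Equiv.subtypeEquivRight fun _ => not_lt.symm)).trans
      (Equiv.sumCompl _)
  let g' : τ ≃ {j : Fin d // (j : ℕ) < k} := Equiv.ofBijective (fun ρ => ⟨g ρ, hgk ρ⟩)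
    ((Fintype.bijective_iff_injective_and_card _).2
      ⟨fun a b hab => hg (congrArg Subtype.val hab),
        by rw [Fintype.card_coe, hk, Fintype.card_fin_lt_of_le hkd]⟩)
  have hcard : Fintype.card {j : Fin d // k ≤ (j : ℕ)} = Fintype.card (σ \ τ : Finset ι) := by
    rw [Fintype.card_fin_ge_of_le hkd, Fintype.card_coe, Finset.card_sdiff_of_subset hτσ, hk, hσ]
  let h' : {j : Fin d // k ≤ (j : ℕ)} ≃ (σ \ τ : Finset ι) := Fintype.equivOfCardEq hcard
  -- listing `τ` through `g⁻¹` makes the upper-left block of `(U * T)_σ` the identity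
  let e := Sum.elim (fun i => (g'.symm i : ι)) (fun i => (h' i : ι))
  have he : Function.Injective e :=
    (Subtype.val_injective.comp g'.symm.injective).sumElim
      (Subtype.val_injective.comp h'.injective)
      fun a b hab => (Finset.mem_sdiff.1 (h' b).2).2 (hab ▸ (g'.symm a).2)
  have heσ : ∀ j, e j ∈ σ := by
    rintro (j | j)
    exacts [hτσ (g'.symm j).2, (Finset.mem_sdiff.1 (h' j).2).1]
  let e₂ : {j : Fin d // k ≤ (j : ℕ)} → N := fun i => ⟨h' i, hσN (h' i).2⟩
  have hg' : ∀ i, g (g'.symm i) = i := fun i => congrArg Subtype.val (g'.apply_symm_apply i)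
  have hblocks : (U * T).submatrix e c = Matrix.fromBlocks 1 0
      ((U * T).submatrix (fun i => (h' i : ι)) Subtype.val)
      ((starU U T N k).submatrix e₂ (Equiv.refl _)) := by
    ext (i | i) (j | j)
    · simp [e, c, hrows, hg', Matrix.one_apply, Pi.single_apply, Subtype.ext_iff, eq_comm]
    · have hij : (j : Fin d) ≠ i := Fin.ne_of_val_ne (by have := i.2; have := j.2; omega)
      simp [e, c, hrows, hg', hij]
    · simp [e, c]
    · simp [e, c, e₂, starU]
  calc absDetRows (starU U T N k) ((σ \ τ).subtype (· ∈ N))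
      = |((starU U T N k).submatrix e₂ (Equiv.refl _)).det| :=
        absDetRows_eq_abs_det_submatrix (σ := (σ \ τ).subtype (· ∈ N)) _
          (by rw [hcard, Fintype.card_coe, Finset.card_subtype,
            Finset.filter_true_of_mem fun a ha => hσN ha])
          (fun a b hab => h'.injective (Subtype.ext (congrArg Subtype.val hab :)))
          (fun i => Finset.mem_subtype.2 (h' i).2) _
    _ = |((U * T).submatrix e c).det| := by
        rw [hblocks, Matrix.det_fromBlocks_zero₁₂, Matrix.det_one, one_mul]
    _ = |T.det| * absDetRows U σ := by
        rw [Matrix.submatrix_mul U T e c c c.bijective, Matrix.det_mul,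
          Matrix.det_submatrix_equiv_self, abs_mul, mul_comm,
          absDetRows_eq_abs_det_submatrix U (by simp [hσ]) he heσ c]

end StarFan

section StarSum

variable {ι : Type*} [Fintype ι] [DecidableEq ι]

lemma SimplicialFan.sdiff_subset_nbF {κ : Type*} (F : SimplicialFan ι κ) {τ σ : Finset ι}
    (hσ : σ ∈ F.cones) (hτσ : τ ⊆ σ) : σ \ τ ⊆ nbF F.cones τ := by
  intro a ha
  rw [Finset.mem_sdiff] at ha
  exact Finset.mem_filter.2
    ⟨Finset.mem_univ a, ha.2, F.downward σ hσ _ (Finset.insert_subset ha.1 hτσ)⟩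

lemma notMem_of_mem_nbF {cones : Finset (Finset ι)} {τ : Finset ι} {a : ι}
    (ha : a ∈ nbF cones τ) : a ∉ τ :=
  (Finset.mem_filter.1 ha).2.1

variable {d k : ℕ} {A : Type*} [CommRing A] [Algebra ℝ A]

lemma aeval_rename_Adj_star (F : SimplicialFan ι (Fin d)) {τ : Finset ι}
    {T : Matrix (Fin d) (Fin d) ℝ} (hT : RowsStd F.U T τ k) (hk : τ.card = k) (y : ι → A) :
    aeval y (rename Subtype.val
        (Adj (starU F.U T (nbF F.cones τ) k) (starCones F.cones τ (nbF F.cones τ)))) =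
      algebraMap ℝ A |T.det| * ∑ σ ∈ F.cones with σ.card = d ∧ τ ⊆ σ,
        algebraMap ℝ A (absDetRows F.U σ) * ∏ ρ ∈ nbF F.cones τ \ σ, y ρ := by
  set N := nbF F.cones τ
  have hkd : k ≤ d := by
    obtain ⟨g, hg, -⟩ := hT
    simpa [hk] using Fintype.card_le_of_injective g hg
  have hcard : ∀ σ ∈ F.cones, τ ⊆ σ → ((σ \ τ).subtype (· ∈ N)).card = σ.card - k :=
    fun σ hσ hτσ => by
      rw [Finset.card_subtype, Finset.filter_true_of_mem (F.sdiff_subset_nbF hσ hτσ),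
        Finset.card_sdiff_of_subset hτσ, hk]
  have hinj : Set.InjOn (fun σ => (σ \ τ).subtype (· ∈ N))
      (F.cones.filter (τ ⊆ ·) : Set (Finset ι)) := by
    intro σ₁ h₁ σ₂ h₂ h
    rw [Finset.mem_coe, Finset.mem_filter] at h₁ h₂
    have hsdiff : σ₁ \ τ = σ₂ \ τ := by
      rw [← Finset.subtype_map_of_mem (F.sdiff_subset_nbF h₁.1 h₁.2),
        ← Finset.subtype_map_of_mem (F.sdiff_subset_nbF h₂.1 h₂.2)]
      exact congrArg _ h
    rw [← Finset.sdiff_union_of_subset h₁.2, ← Finset.sdiff_union_of_subset h₂.2, hsdiff]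
  rw [aeval_rename, Adj, map_sum, starCones, Finset.filter_image,
    Finset.sum_image (hinj.mono (Finset.coe_subset.2 (Finset.filter_subset _ _))),
    Finset.filter_filter, Finset.mul_sum]
  refine Finset.sum_congr (Finset.filter_congr fun σ hσ => ?_) fun σ hσmem => ?_
  · rw [Fintype.card_fin_ge_of_le hkd]
    constructor
    · rintro ⟨hτσ, hσd⟩
      rw [hcard σ hσ hτσ] at hσd
      have := Finset.card_le_card hτσ
      exact ⟨by omega, hτσ⟩
    · rintro ⟨hσd, hτσ⟩
      exact ⟨hτσ, by rw [hcard σ hσ hτσ, hσd]⟩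
  · obtain ⟨hσ, hσd, hτσ⟩ := Finset.mem_filter.1 hσmem
    have hcompl : ((σ \ τ).subtype (· ∈ N))ᶜ = (N \ σ).subtype (· ∈ N) := by
      ext a
      simp [notMem_of_mem_nbF a.2]
    simp only [map_mul, map_prod, aeval_C, aeval_X, Function.comp_apply, hcompl]
    rw [absDetRows_starU hT hk hτσ (F.sdiff_subset_nbF hσ hτσ) hσd, map_mul,
      Finset.prod_subtype_eq_prod_filter,
      Finset.filter_true_of_mem fun a ha => (Finset.mem_sdiff.1 ha).1]
    ring

end StarSum

section PrimitiveCollection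

variable {ι : Type*} [DecidableEq ι] {J : Finset ι} {ρ : ι}

lemma notMem_of_erase_subset {cones : Finset (Finset ι)} (hJ : ∀ σ ∈ cones, ¬ J ⊆ σ)
    (hρ : ρ ∈ J) {σ : Finset ι} (hσ : σ ∈ cones) (hτσ : J.erase ρ ⊆ σ) : ρ ∉ σ :=
  fun hρσ => hJ σ hσ (Finset.insert_erase hρ ▸ Finset.insert_subset hρσ hτσ)

variable [Fintype ι]

lemma notMem_of_mem_nbF_erase {cones : Finset (Finset ι)} (hJ : ∀ σ ∈ cones, ¬ J ⊆ σ)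
    (hρ : ρ ∈ J) {a : ι} (ha : a ∈ nbF cones (J.erase ρ)) : a ∉ J := by
  obtain ⟨-, haτ, hins⟩ := Finset.mem_filter.1 ha
  intro haJ
  rcases eq_or_ne a ρ with rfl | hne
  · exact hJ _ hins (Finset.insert_erase hρ).ge
  · exact haτ (Finset.mem_erase.2 ⟨hne, haJ⟩)

lemma prod_compl_erase_eq {κ A : Type*} [CommMonoid A] {F : SimplicialFan ι κ}
    (hJ : ∀ σ ∈ F.cones, ¬ J ⊆ σ) (hρ : ρ ∈ J) {σ : Finset ι} (hσ : σ ∈ F.cones) (hτσ : J.erase ρ ⊆ σ) (x : ι → A) :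
    ∏ ρ' ∈ σᶜ.erase ρ, x ρ' =
      (∏ ρ' ∈ (nbF F.cones (J.erase ρ) ∪ J)ᶜ, x ρ') * ∏ ρ' ∈ nbF F.cones (J.erase ρ) \ σ, x ρ' := by
  set N := nbF F.cones (J.erase ρ)
  have hNJ : ∀ a ∈ N, a ∉ J := fun a => notMem_of_mem_nbF_erase hJ hρ
  have hσN : ∀ a ∈ σ, a ∉ J.erase ρ → a ∈ N := fun a ha haτ =>
    F.sdiff_subset_nbF hσ hτσ (Finset.mem_sdiff.2 ⟨ha, haτ⟩)
  have hρσ := notMem_of_erase_subset hJ hρ hσ hτσ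
  rw [← Finset.prod_union (Finset.disjoint_left.2 fun a ha hb =>
    Finset.mem_compl.1 ha (Finset.mem_union_left _ (Finset.mem_sdiff.1 hb).1))]
  refine Finset.prod_congr (Finset.ext fun a => ?_) fun _ _ => rfl
  simp only [Finset.mem_erase, Finset.mem_compl, Finset.mem_union, Finset.mem_sdiff, not_or]
  grind

lemma aeval_starAdj_eq_abs_det_mul_aeval_pderiv_Adj {A : Type*} [CommRing A] [Algebra ℝ A]
    {x : ι → A} {d : ℕ} (F : SimplicialFan ι (Fin d))
    (hJ : ∀ σ ∈ F.cones, ¬ J ⊆ σ) (hρ : ρ ∈ J) {T : Matrix (Fin d) (Fin d) ℝ}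
    (hT : RowsStd F.U T (J.erase ρ) (J.card - 1)) (hx : ∀ ρ ∈ J, x ρ = 0) :
    aeval x ((∏ ρ' ∈ (nbF F.cones (J.erase ρ) ∪ J)ᶜ, X ρ') *
        rename Subtype.val (Adj (starU F.U T (nbF F.cones (J.erase ρ)) (J.card - 1))
          (starCones F.cones (J.erase ρ) (nbF F.cones (J.erase ρ))))) =
      algebraMap ℝ A |T.det| * aeval x (pderiv ρ (Adj F.U F.cones)) := by
  rw [map_mul, aeval_rename_Adj_star F hT (Finset.card_erase_of_mem hρ),
    aeval_pderiv_Adj_of_forall_eq_zero _ _ hx, Finset.mul_sum, Finset.mul_sum, Finset.mul_sum]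
  refine Finset.sum_congr (Finset.filter_congr fun σ hσ => ?_) fun σ hσmem => ?_
  · rw [Fintype.card_fin]
    exact ⟨fun ⟨hσd, hτσ⟩ => ⟨hσd, notMem_of_erase_subset hJ hρ hσ hτσ, hτσ⟩,
      fun ⟨hσd, _, hτσ⟩ => ⟨hσd, hτσ⟩⟩
  · obtain ⟨hσ, -, -, hτσ⟩ := Finset.mem_filter.1 hσmem
    rw [prod_compl_erase_eq hJ hρ hσ hτσ, map_prod]
    simp only [aeval_X]
    ring

end PrimitiveCollection

theorem statement15_general {ι : Type*} [Fintype ι] [DecidableEq ι] {d : ℕ}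
    (F : SimplicialFan ι (Fin d))
    (J : Finset ι)
    (hJ : ∀ σ ∈ F.cones, ¬ J ⊆ σ)
    (T : ι → Matrix (Fin d) (Fin d) ℝ)
    (hT : ∀ ρ ∈ J, (T ρ).det ≠ 0 ∧ RowsStd F.U (T ρ) (J.erase ρ) (J.card - 1)) :
    ∀ x : ι → ℂ, (∀ ρ ∈ J, x ρ = 0) →
      ((∀ ρ : ι, MvPolynomial.aeval x (MvPolynomial.pderiv ρ (Adj F.U F.cones)) = 0) ↔
        ∀ ρ ∈ J,
          MvPolynomial.aeval x
            ((∏ ρ' ∈ (nbF F.cones (J.erase ρ) ∪ J)ᶜ, MvPolynomial.X ρ') *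
              MvPolynomial.rename Subtype.val
                (Adj (starU F.U (T ρ) (nbF F.cones (J.erase ρ)) (J.card - 1))
                  (starCones F.cones (J.erase ρ) (nbF F.cones (J.erase ρ))))) = 0) := by
  intro x hx
  refine ⟨fun hsing ρ hρ => ?_, fun hstar ρ => ?_⟩
  · rw [aeval_starAdj_eq_abs_det_mul_aeval_pderiv_Adj F hJ hρ (hT ρ hρ).2 hx, hsing ρ, mul_zero]
  · by_cases hρ : ρ ∈ J
    · have h := hstar ρ hρ
      rw [aeval_starAdj_eq_abs_det_mul_aeval_pderiv_Adj F hJ hρ (hT ρ hρ).2 hx] at h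
      exact (mul_eq_zero.1 h).resolve_left (by simpa using (hT ρ hρ).1)
    · exact aeval_pderiv_Adj_eq_zero_of_notMem F.U hJ hx hρ

/-- (The singular locus inside a coordinate subspace `Λ_J`.)
Let `J ∈ Σᶜ` be a primitive collection, i.e. `J` is not contained in a cone of `Σ` but
for each `ρ ∈ J` the set `τ_ρ = J ∖ {ρ}` spans a cone of `Σ(|J|-1)`. For each `ρ ∈ J`
fix an invertible matrix `T_ρ` adapted to `τ_ρ` as in the restriction lemma, giving the
star fan data `(U_{τ_ρ}, Σ_{τ_ρ})`. Then for a point `x` of `Λ_J` (i.e. `x_ρ = 0` for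
`ρ ∈ J`), `x` lies in `Sing(A_Σ)` (all partial derivatives of `Adj_Σ` vanish at `x`)
if and only if the `|J|` equations
`(∏_{ρ' ∉ nb(τ_ρ), ρ' ∉ J} x_{ρ'}) · Adj_{Σ_{τ_ρ}, U_{τ_ρ}} = 0`, `ρ ∈ J`, hold;
together with the `|J|` equations `x_ρ = 0`, `ρ ∈ J`, these `2|J|` equations cut out
`Sing(A_Σ) ∩ Λ_J`. -/
theorem statement15 {ι : Type*} [Fintype ι] [DecidableEq ι] {d : ℕ}
    (F : SimplicialFan ι (Fin d)) (hrank : F.U.rank = d)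
    (J : Finset ι)
    (hJ : ∀ σ ∈ F.cones, ¬ J ⊆ σ) (hJprim : ∀ ρ ∈ J, J.erase ρ ∈ F.cones)
    (T : ι → Matrix (Fin d) (Fin d) ℝ)
    (hT : ∀ ρ ∈ J, (T ρ).det ≠ 0 ∧ RowsStd F.U (T ρ) (J.erase ρ) (J.card - 1)) :
    ∀ x : ι → ℂ, (∀ ρ ∈ J, x ρ = 0) →
      ((∀ ρ : ι, MvPolynomial.aeval x (MvPolynomial.pderiv ρ (Adj F.U F.cones)) = 0) ↔
        ∀ ρ ∈ J,
          MvPolynomial.aeval x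
            ((∏ ρ' ∈ (nbF F.cones (J.erase ρ) ∪ J)ᶜ, MvPolynomial.X ρ') *
              MvPolynomial.rename Subtype.val
                (Adj (starU F.U (T ρ) (nbF F.cones (J.erase ρ)) (J.card - 1))
                  (starCones F.cones (J.erase ρ) (nbF F.cones (J.erase ρ))))) = 0) :=
  statement15_general F J hJ T hT
end

section
/- Let Σ be a simplicial polyhedral fan in ℝ^d with n rays and ray matrix U of rank d, such that every cone of Σ is a face of a d-dimensional cone (Σ = Σ̄). Let M be the |Σ(1)|×|Σ(d)| matrix with M_{ρ,σ} = |det U_σ| if ρ ∉ σ(1) and M_{ρ,σ} = 0 otherwise, and let φ_Σ : ℙ^{n−1}∖Z(Σ) → ℙ^{|Σ(d)|−1} be the monomial map φ_Σ(x) = (x^σ̂)_{σ∈Σ(d)} with x^σ̂ = ∏_{ρ∉σ(1)} x_ρ. If x ∈ ℙ^{n−1} belongs to Sing(A_Σ)∖Z(Σ), then M·φ_Σ(x) = 0. -/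
open MvPolynomial Finset MeasureTheory
open scoped ENNReal

theorem MvPolynomial.X_mul_pderiv_prod_X {R ι : Type*} [CommSemiring R] [DecidableEq ι]
    (ρ : ι) (s : Finset ι) :
    X ρ * pderiv ρ (∏ i ∈ s, X i : MvPolynomial ι R) = if ρ ∈ s then ∏ i ∈ s, X i else 0 := by
  have hprod : (∏ i ∈ s, X i : MvPolynomial ι R) = monomial (∑ i ∈ s, Finsupp.single i 1) 1 := by
    rw [monomial_sum_one]; rfl
  rw [hprod, X_mul_pderiv_monomial, Finsupp.finsetSum_apply]
  simp only [Finsupp.single_apply, sum_ite_eq']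
  split_ifs <;> simp_all

theorem X_mul_pderiv_Adj {ι κ : Type*} [Fintype ι] [DecidableEq ι] [Fintype κ] [DecidableEq κ]
    (U : Matrix ι κ ℝ) (cones : Finset (Finset ι)) (ρ : ι) :
    X ρ * pderiv ρ (Adj U cones) = ∑ σ ∈ cones.filter fun σ => σ.card = Fintype.card κ,
      C (if ρ ∈ σ then 0 else absDetRows U σ) * ∏ i ∈ σᶜ, X i := by
  rw [Adj, map_sum, mul_sum]
  refine sum_congr rfl fun σ _ => ?_
  rw [pderiv_C_mul, mul_left_comm, X_mul_pderiv_prod_X]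
  split_ifs <;> simp_all

theorem statement16_general {ι κ : Type*} [Fintype ι] [DecidableEq ι] [Fintype κ] [DecidableEq κ]
    (F : SimplicialFan ι κ)
    (x : ι → ℂ)
    (hsing : ∀ ρ : ι, MvPolynomial.aeval x (MvPolynomial.pderiv ρ (Adj F.U F.cones)) = 0) :
    ∀ ρ : ι, ∑ σ ∈ F.cones.filter fun σ => σ.card = Fintype.card κ,
      (if ρ ∈ σ then 0 else (absDetRows F.U σ : ℂ)) * ∏ ρ' ∈ σᶜ, x ρ' = 0 := by
  intro ρ
  have h := congrArg (aeval x) (X_mul_pderiv_Adj F.U F.cones ρ)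
  rw [map_mul, hsing ρ, mul_zero, eq_comm] at h
  simpa [apply_ite] using h

/-- Suppose every cone of `Σ` is a face of a `d`-dimensional cone
(`Σ = Σ̄`). Let `M` be the `Σ(1) × Σ(d)` matrix with `M_{ρ,σ} = |det U_σ|` if `ρ ∉ σ`
and `0` otherwise, and let `φ_Σ(x) = (∏_{ρ ∉ σ} x_ρ)_{σ ∈ Σ(d)}` be the monomial map.
If `x ∈ Sing(A_Σ) ∖ Z(Σ)` — i.e. all partials of `Adj_Σ` vanish at `x`, but `x` is not
a common zero of the irrelevant ideal — then `M · φ_Σ(x) = 0`. -/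
theorem statement16 {ι κ : Type*} [Fintype ι] [DecidableEq ι] [Fintype κ] [DecidableEq κ]
    (F : SimplicialFan ι κ) (hrank : F.U.rank = Fintype.card κ)
    (hbar : ∀ σ ∈ F.cones, ∃ σ' ∈ F.cones, σ ⊆ σ' ∧ σ'.card = Fintype.card κ)
    (x : ι → ℂ)
    (hsing : ∀ ρ : ι, MvPolynomial.aeval x (MvPolynomial.pderiv ρ (Adj F.U F.cones)) = 0)
    (hnotZ : ∃ σ ∈ F.cones, (∏ ρ ∈ σᶜ, x ρ) ≠ 0) :
    ∀ ρ : ι, ∑ σ ∈ F.cones.filter fun σ => σ.card = Fintype.card κ,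
      (if ρ ∈ σ then 0 else (absDetRows F.U σ : ℂ)) * ∏ ρ' ∈ σᶜ, x ρ' = 0 :=
  statement16_general F x hsing
end
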